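/- arXiv:2409.09869 — 2 statements merged into one kernel-verified Lean document; each statement's English description precedes it below -/
import Mathlib

section
/- Let X be a metric space, G ⊆ X a nonempty set with d_G(x) := infDist(x, G), and f : X → X a map such that for every x ∈ X, d_G(f^[n](x)) → 0 as n → ∞ (f is the closed loop under a G-stabilizer). Let s : ℕ → X be a trajectory, Q : ℕ → ℝ, and ν > 0 such that Q(t) ≥ 0 for all t, and for every t either Q(t+1) ≤ Q(t) − ν (a successful critic update, after which the next state is arbitrary), or both s(t+1) = f(s(t)) and Q(t+1) = Q(t) (the fallback stabilizer is invoked and the critic value is frozen). Then d_G(s(t)) → 0 as t → ∞. -/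
open Filter Metric

/-- non-uniform part of Theorem 1: Suppose every trajectory of the
fallback closed-loop map `f` converges to the goal set `G` (in distance). If along a
trajectory `s` with stored critic values `Q ≥ 0` at each time either the critic
update succeeds (`Q (t+1) ≤ Q t - ν`, next state arbitrary) or the fallback
stabilizer is invoked (`s (t+1) = f (s t)` and `Q (t+1) = Q t`), then
`infDist (s t) G → 0`: the CALF-generated policy is a `G`-stabilizer. -/
theorem calf_is_stabilizer {X : Type*} [MetricSpace X]
    (G : Set X) (hG : G.Nonempty) (f : X → X)
    (hstab : ∀ x : X, Tendsto (fun n => infDist (f^[n] x) G) atTop (nhds 0))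
    (s : ℕ → X) (Q : ℕ → ℝ) (ν : ℝ) (hν : 0 < ν)
    (hQnonneg : ∀ t, 0 ≤ Q t)
    (hstep : ∀ t, Q (t + 1) ≤ Q t - ν ∨ (s (t + 1) = f (s t) ∧ Q (t + 1) = Q t)) :
    Tendsto (fun t => infDist (s t) G) atTop (nhds 0) := by
  classical
  set P : ℕ → Prop := fun t => ¬ (s (t + 1) = f (s t) ∧ Q (t + 1) = Q t) with hP
  -- key counting bound
  have hbound : ∀ n, Q n + ν * ((Finset.range n).filter P).card ≤ Q 0 := by
    intro n
    induction n with
    | zero => simp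
    | succ n ih =>
      rw [Finset.range_add_one, Finset.filter_insert]
      by_cases h : P n
      · have hdec : Q (n + 1) ≤ Q n - ν := by
          rcases hstep n with h' | h'
          · exact h'
          · exact absurd h' h
        rw [if_pos h, Finset.card_insert_of_notMem (by simp)]
        push_cast
        nlinarith
      · have h' : Q (n + 1) = Q n := (not_not.mp h).2
        rw [if_neg h, h']
        exact ih
  -- the set of "success" times is finite
  have hfin : {t | P t}.Finite := by
    by_contra hinf
    obtain ⟨F, hF, hcard⟩ := Set.Infinite.exists_subset_card_eq hinf (⌈Q 0 / ν⌉₊ + 1)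
    obtain ⟨N, hN⟩ : ∃ N, ∀ t ∈ F, t < N := by
      rcases F.bddAbove with ⟨N, hN⟩
      exact ⟨N + 1, fun t ht => Nat.lt_succ_of_le (hN ht)⟩
    have hsub : F ⊆ (Finset.range N).filter P := by
      intro t ht
      simp only [Finset.mem_filter, Finset.mem_range]
      exact ⟨hN t ht, hF ht⟩
    have hcards := Finset.card_le_card hsub
    have := hbound N
    have hQN := hQnonneg N
    have hle : ν * (F.card : ℝ) ≤ Q 0 := by
      calc ν * (F.card : ℝ) ≤ ν * (((Finset.range N).filter P).card : ℝ) := by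
            apply mul_le_mul_of_nonneg_left (by exact_mod_cast hcards) hν.le
        _ ≤ Q 0 := by linarith
    have : (F.card : ℝ) ≤ Q 0 / ν := (le_div_iff₀' hν).mpr hle
    rw [hcard] at this
    have hceil : (⌈Q 0 / ν⌉₊ : ℝ) + 1 ≤ Q 0 / ν := by push_cast at this; linarith
    have := Nat.le_ceil (Q 0 / ν)
    linarith
  -- hence from some time on, the fallback is always used
  obtain ⟨T, hT⟩ : ∃ T, ∀ t, T ≤ t → s (t + 1) = f (s t) := by
    rcases hfin.bddAbove with ⟨T, hT⟩
    refine ⟨T + 1, fun t ht => ?_⟩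
    by_contra hc
    have : P t := fun h => hc h.1
    have := hT this
    omega
  have hiter : ∀ n, s (T + n) = f^[n] (s T) := by
    intro n
    induction n with
    | zero => simp
    | succ n ih =>
      have hEq : T + (n + 1) = (T + n) + 1 := by omega
      rw [hEq, hT (T + n) (Nat.le_add_right _ _), ih, Function.iterate_succ_apply']
  have := (hstab (s T)).comp (tendsto_sub_atTop_nat T)
  refine this.congr' ?_
  filter_upwards [eventually_ge_atTop T] with t ht
  have : s t = f^[t - T] (s T) := by
    have := hiter (t - T)
    rwa [Nat.add_sub_cancel' ht] at this
  simp [Function.comp, this]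
end

section
/- Let X be a metric space, G ⊆ X nonempty with d_G(x) := infDist(x, G), f : X → X, h > 0, and M ∈ ℕ such that for every x ∈ X there exists k ≤ M with d_G(f^[k](x)) ≤ h (the fallback closed loop reaches the h-neighborhood of G within M steps from any state). Let s : ℕ → X, Q : ℕ → ℝ, ν > 0 satisfy: Q(t) ≥ 0 for all t, and for every t either Q(t+1) ≤ Q(t) − ν, or both s(t+1) = f(s(t)) and Q(t+1) = Q(t). Then there exists a time t ≤ (⌊Q(0)/ν⌋ + 1)·(M + 1) with d_G(s(t)) ≤ h; in particular the trajectory reaches every closed h-neighborhood G' of G in a number of steps bounded by the product of the critic-success budget and the fallback reaching time. -/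
open Metric

/-- quantitative reaching time, T* = T̂ · T̄^{π₀}: if the fallback
closed loop `f` reaches the `h`-neighborhood of `G` within `M` steps from any
state, and the trajectory `s` with critic values `Q ≥ 0` at each step either has a
successful critic update (`Q (t+1) ≤ Q t - ν`) or follows `f` with `Q` frozen,
then the `h`-neighborhood of `G` is reached by `s` within
`(⌊Q 0 / ν⌋ + 1) · (M + 1)` steps. -/
theorem calf_reaching_time {X : Type*} [MetricSpace X]
    (G : Set X) (hG : G.Nonempty) (f : X → X) (h : ℝ) (hh : 0 < h) (M : ℕ)
    (hreach : ∀ x : X, ∃ k ≤ M, infDist (f^[k] x) G ≤ h)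
    (s : ℕ → X) (Q : ℕ → ℝ) (ν : ℝ) (hν : 0 < ν)
    (hQnonneg : ∀ t, 0 ≤ Q t)
    (hstep : ∀ t, Q (t + 1) ≤ Q t - ν ∨ (s (t + 1) = f (s t) ∧ Q (t + 1) = Q t)) :
    ∃ t ≤ (⌊Q 0 / ν⌋₊ + 1) * (M + 1), infDist (s t) G ≤ h := by
  classical
  set m := ⌊Q 0 / ν⌋₊ with hm
  set N := (m + 1) * (M + 1) with hN
  set succ : ℕ → Prop := fun t => Q (t + 1) ≤ Q t - ν with hsuccdef
  -- counting bound
  have hQle : ∀ t, Q t + ν * ((Finset.range t).filter succ).card ≤ Q 0 := by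
    intro t
    induction t with
    | zero => simp
    | succ t ih =>
      rw [Finset.range_add_one, Finset.filter_insert]
      by_cases hs : succ t
      · rw [if_pos hs, Finset.card_insert_of_notMem (by simp)]
        push_cast
        have : Q (t + 1) ≤ Q t - ν := hs
        nlinarith
      · rw [if_neg hs]
        have hfall : Q (t + 1) = Q t := by
          rcases hstep t with h1 | h2
          · exact absurd h1 hs
          · exact h2.2
        rw [hfall]; exact ih
  have hcount : ∀ t, ((Finset.range t).filter succ).card ≤ m := by
    intro t
    apply Nat.le_floor
    have h1 := hQle t
    have h2 := hQnonneg t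
    rw [le_div_iff₀ hν]
    nlinarith
  -- pigeonhole: some block of M+1 steps has no successful update
  have hblock : ∃ j ≤ m, ∀ k ≤ M, ¬ succ (j * (M + 1) + k) := by
    by_contra hcon
    push_neg at hcon
    have hcon' : ∀ j, ∃ k, j ≤ m → k ≤ M ∧ succ (j * (M + 1) + k) := by
      intro j
      by_cases hj : j ≤ m
      · obtain ⟨k, hk, hsk⟩ := hcon j hj
        exact ⟨k, fun _ => ⟨hk, hsk⟩⟩
      · exact ⟨0, fun hj' => absurd hj' hj⟩
    choose idx hidx using hcon'
    set F : ℕ → ℕ := fun j => j * (M + 1) + idx j with hF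
    have hmaps : ∀ j ∈ Finset.range (m + 1), F j ∈ (Finset.range N).filter succ := by
      intro j hj
      rw [Finset.mem_range] at hj
      have hj' : j ≤ m := Nat.lt_succ_iff.mp hj
      obtain ⟨hk, hsk⟩ := hidx j hj'
      rw [Finset.mem_filter, Finset.mem_range]
      constructor
      · calc F j = j * (M + 1) + idx j := rfl
          _ ≤ m * (M + 1) + M := by
              have := Nat.mul_le_mul_right (M + 1) hj'
              omega
          _ < N := by rw [hN]; ring_nf; omega
      · exact hsk
    have hinj : Set.InjOn F (Finset.range (m + 1)) := by
      intro a ha b hb hab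
      rw [Finset.coe_range, Set.mem_Iio] at ha hb
      have ha' : idx a ≤ M := (hidx a (Nat.lt_succ_iff.mp ha)).1
      have hb' : idx b ≤ M := (hidx b (Nat.lt_succ_iff.mp hb)).1
      have hda : F a / (M + 1) = a := by
        rw [hF]; simp only
        rw [add_comm, Nat.add_mul_div_right _ _ (by omega : 0 < M + 1), Nat.div_eq_of_lt (by omega)]; omega
      have hdb : F b / (M + 1) = b := by
        rw [hF]; simp only
        rw [add_comm, Nat.add_mul_div_right _ _ (by omega : 0 < M + 1), Nat.div_eq_of_lt (by omega)]; omega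
      rw [← hda, ← hdb, hab]
    have hcard := Finset.card_le_card_of_injOn F hmaps hinj
    rw [Finset.card_range] at hcard
    have := hcount N
    omega
  obtain ⟨j, hj, hblk⟩ := hblock
  -- within the block the trajectory follows f
  have hiter : ∀ k ≤ M, s (j * (M + 1) + k) = f^[k] (s (j * (M + 1))) := by
    intro k hk
    induction k with
    | zero => simp
    | succ k ih =>
      have hk' : k ≤ M := Nat.le_of_succ_le hk
      have hns : ¬ succ (j * (M + 1) + k) := hblk k hk'
      rcases hstep (j * (M + 1) + k) with h1 | h2
      · exact absurd h1 hns
      · rw [show j * (M + 1) + (k + 1) = (j * (M + 1) + k) + 1 from rfl, h2.1,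
          ih hk', Function.iterate_succ_apply']
  obtain ⟨k, hkM, hkreach⟩ := hreach (s (j * (M + 1)))
  refine ⟨j * (M + 1) + k, ?_, by rw [hiter k hkM]; exact hkreach⟩
  have := Nat.mul_le_mul_right (M + 1) hj
  calc j * (M + 1) + k ≤ m * (M + 1) + M := by omega
    _ ≤ (m + 1) * (M + 1) := by ring_nf; omega
end
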